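/- Let V satisfy the basic assumptions with decay exponent a > 3/2. Then there exists a constant C > 0 such that for all n ≥ 2, ‖σ^∞ − σ^n‖²_{ℓ²(ℕ)} ≤ C n^{3−2a}. -/

import Mathlib

open Filter Set MeasureTheory
open scoped Classical ENNReal NNReal BigOperators

noncomputable section

/-- `lam V x` is λ(x) := inf_{(0,x)} V''. -/
def lam (V : ℝ → ℝ) (x : ℝ) : ℝ :=
  sInf (deriv (deriv V) '' Set.Ioo 0 x)

/-- The basic assumptions (Reg), (Sing), (Cvx), (Dec) on the interaction
potential `V`, with decay exponent `a`. -/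
structure BasicAssumptions (V : ℝ → ℝ) (a : ℝ) : Prop where
  nonneg : ∀ x : ℝ, 0 ≤ V x
  even : ∀ x : ℝ, V (-x) = V x
  pos : ∀ x : ℝ, x ≠ 0 → 0 < V x
  smooth : ContDiffOn ℝ 2 V {(0 : ℝ)}ᶜ
  sing : Filter.Tendsto V (nhdsWithin 0 {(0 : ℝ)}ᶜ) Filter.atTop
  cvx : ∀ x : ℝ, 0 < x → 0 < lam V x
  decV : Filter.Tendsto V Filter.atTop (nhds 0)
  decV' : Filter.Tendsto (deriv V) Filter.atTop (nhds 0)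
  one_lt_a : 1 < a
  decV'' : ∀ δ : ℝ, 0 < δ → ∃ c : ℝ, 0 < c ∧
    ∀ x : ℝ, δ ≤ |x| → deriv (deriv V) x ≤ c * |x| ^ (-(a + 2))

/-- The configuration space 𝒟_n. -/
def Dn (n : ℕ) : Set (Fin (n + 1) → ℝ) :=
  {x | x 0 = 0 ∧ x (Fin.last n) = 1 ∧ Monotone x}

/-- The energy E_n(x) := (1/n) Σ_{k=1}^{n} Σ_{j=0}^{n−k} V(n[x(j+k) − x(j)]),
valued in [0,∞], with the convention V(0) = +∞ from (Sing).  The double sum is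
written as a sum over all pairs q < p. -/
def En (V : ℝ → ℝ) (n : ℕ) (x : Fin (n + 1) → ℝ) : ℝ≥0∞ :=
  ENNReal.ofReal (1 / (n : ℝ)) *
    ∑ p : Fin (n + 1), ∑ q : Fin (n + 1),
      if (q : ℕ) < (p : ℕ) then
        (if x p = x q then ⊤ else ENNReal.ofReal (V ((n : ℝ) * (x p - x q))))
      else 0

/-- The first-order Taylor remainder φ_k(y) := V(k+y) − V(k) − V'(k)y. -/
def phi (V : ℝ → ℝ) (k y : ℝ) : ℝ :=
  V (k + y) - V k - deriv V k * y

/-- The lower-bound function Φ_k. -/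
def PhiLB (V : ℝ → ℝ) (k y : ℝ) : ℝ :=
  if y ≤ 1 then 1 / 2 * lam V (k + 1) * y ^ 2 else lam V (k + 1) * (y - 1 / 2)

/-- σ^n(i) := Σ_{k=i+1}^{n−i} min(k−i, n−i+1−k)|V'(k)| for 1 ≤ i ≤ ⌊n/2⌋,
and 0 otherwise. -/
def sigman (V : ℝ → ℝ) (n i : ℕ) : ℝ :=
  if 1 ≤ i ∧ i ≤ n / 2 then
    ∑ k ∈ Finset.Icc (i + 1) (n - i),
      ((min (k - i) (n + 1 - i - k) : ℕ) : ℝ) * |deriv V (k : ℝ)|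
  else 0

/-- σ^∞(i) := Σ_{k=i+1}^∞ (k−i)|V'(k)| for i ≥ 1 (index 0 is inert). -/
def sigmaInf (V : ℝ → ℝ) (i : ℕ) : ℝ :=
  if i = 0 then 0
  else ∑' m : ℕ, ((m + 1 : ℕ) : ℝ) * |deriv V ((i + 1 + m : ℕ) : ℝ)|

/-- Dom E_n^1 := {ε ∈ ℝ^n : −1 ≤ ε(i) ≤ n, Σ_{i=1}^n ε(i) = 0}, regarded as a
subset of ℓ²(ℕ) by extension by zero. -/
def DomEn1 (n : ℕ) : Set (ℕ → ℝ) :=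
  {ε | (∀ i, 1 ≤ i → i ≤ n → -1 ≤ ε i ∧ ε i ≤ (n : ℝ)) ∧
    (∀ i, i = 0 ∨ n < i → ε i = 0) ∧
    (∑ i ∈ Finset.Icc 1 n, ε i) = 0}

/-- The renormalised energy
E_n^1(ε) := Σ_{k=1}^{n} Σ_{j=0}^{n−k} [V(k + Σ_{l=j+1}^{j+k} ε(l)) − V(k)]. -/
def En1 (V : ℝ → ℝ) (n : ℕ) (ε : ℕ → ℝ) : ℝ :=
  ∑ k ∈ Finset.Icc 1 n, ∑ j ∈ Finset.range (n - k + 1),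
    (V ((k : ℝ) + ∑ l ∈ Finset.Icc (j + 1) (j + k), ε l) - V (k : ℝ))

/-- The quadratic-type part Q_n(ε) := Σ_{k=1}^{n} Σ_{j=0}^{n−k} φ_k(Σ_{l=j+1}^{k+j} ε(l)). -/
def Qn (V : ℝ → ℝ) (n : ℕ) (ε : ℕ → ℝ) : ℝ :=
  ∑ k ∈ Finset.Icc 1 n, ∑ j ∈ Finset.range (n - k + 1),
    phi V (k : ℝ) (∑ l ∈ Finset.Icc (j + 1) (j + k), ε l)

/-- The half truncation ε^{n,1/2}(i) := ε(i) for 1 ≤ i ≤ ⌈n/2⌉ and 0 otherwise. -/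
def half (n : ℕ) (ε : ℕ → ℝ) (i : ℕ) : ℝ :=
  if 1 ≤ i ∧ i ≤ (n + 1) / 2 then ε i else 0

/-- The reversal ε⃖(i) := ε(n+1−i) for 1 ≤ i ≤ n, extended by zero. -/
def rev (n : ℕ) (ε : ℕ → ℝ) (i : ℕ) : ℝ :=
  if 1 ≤ i ∧ i ≤ n then ε (n + 1 - i) else 0

/-- Dom E_∞^l := {ε ∈ ℓ²(ℕ) : ε(i) ≥ −1 for all i ≥ 1} (index 0 is inert). -/
def DomEinfl : Set (ℕ → ℝ) :=
  {ε | Summable (fun i => ε i ^ 2) ∧ ε 0 = 0 ∧ ∀ i, 1 ≤ i → -1 ≤ ε i}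

/-- Q_∞(ε) := Σ_{k=1}^∞ Σ_{j=0}^∞ φ_k(Σ_{l=j+1}^{k+j} ε(l)), valued in [0,∞]
(the summands are nonnegative). -/
def Qinf (V : ℝ → ℝ) (ε : ℕ → ℝ) : ℝ≥0∞ :=
  ∑' (k : ℕ) (j : ℕ),
    ENNReal.ofReal (phi V ((k : ℝ) + 1) (∑ l ∈ Finset.Icc (j + 1) (j + k + 1), ε l))

/-- The linear term (σ^∞, ε)_{ℓ²(ℕ)} as an extended real (difference of the
sums of the positive and negative parts). -/
def linPart (V : ℝ → ℝ) (ε : ℕ → ℝ) : EReal :=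
  ((∑' i : ℕ, ENNReal.ofReal (sigmaInf V i * ε i) : ℝ≥0∞) : EReal) -
    ((∑' i : ℕ, ENNReal.ofReal (-(sigmaInf V i * ε i)) : ℝ≥0∞) : EReal)

/-- The limit boundary-layer energy E_∞^l(ε) := Q_∞(ε) + (σ^∞, ε), valued in
the extended reals. -/
def Einfl (V : ℝ → ℝ) (ε : ℕ → ℝ) : EReal :=
  (Qinf V ε : EReal) + linPart V ε

end


/-
If `V'' ≤ c x^{-(a+2)}` and `V' ↑ 0`, then `|V'(x)| ≤ B x^{-(a+1)}`, so
`σ^∞(i) = O(i^{1-a})`. For `i ≤ n/2`, the weights of `σⁿ(i)` and `σ^∞(i)` coincide for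
`k ≤ ⌈n/2⌉`, so `0 ≤ σ^∞(i) - σⁿ(i) = O(n^{1-a})`; for `i > n/2`, `σⁿ(i) = 0`. Hence the
squared ℓ² distance is at most `n/2` terms of size `O(n^{2-2a})` plus
`∑_{i > n/2} O(i^{2-2a}) = O(n^{3-2a})`, using `a > 3/2`.
-/

open Topology

namespace BasicAssumptions

variable {V : ℝ → ℝ} {a : ℝ}

lemma deriv_deriv_pos (h : BasicAssumptions V a) {x : ℝ} (hx : 0 < x) :
    0 < deriv (deriv V) x := by
  have hlam : 0 < lam V (x + 1) := h.cvx (x + 1) (by linarith)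
  have hbdd : BddBelow (deriv (deriv V) '' Ioo 0 (x + 1)) := by
    by_contra hb
    rw [lam, Real.sInf_of_not_bddBelow hb] at hlam
    exact hlam.false
  exact hlam.trans_le (csInf_le hbdd ⟨x, ⟨hx, by linarith⟩, rfl⟩)

lemma differentiableAt_deriv (h : BasicAssumptions V a) {x : ℝ} (hx : x ≠ 0) :
    DifferentiableAt ℝ (deriv V) x :=
  ((h.smooth.deriv_of_isOpen isOpen_compl_singleton (by norm_num)).differentiableOn
    one_ne_zero).differentiableAt (isOpen_compl_singleton.mem_nhds hx)

lemma monotoneOn_deriv (h : BasicAssumptions V a) : MonotoneOn (deriv V) (Ioi 0) := by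
  have hdiff : DifferentiableOn ℝ (deriv V) (Ioi 0) := fun x hx =>
    (h.differentiableAt_deriv (ne_of_gt hx)).differentiableWithinAt
  refine monotoneOn_of_deriv_nonneg (convex_Ioi 0) hdiff.continuousOn ?_ ?_ <;>
    rw [interior_Ioi]
  · exact hdiff
  · exact fun x hx => (h.deriv_deriv_pos hx).le

lemma deriv_nonpos (h : BasicAssumptions V a) {x : ℝ} (hx : 0 < x) : deriv V x ≤ 0 :=
  ge_of_tendsto h.decV' <| (eventually_ge_atTop x).mono fun _ hy =>
    h.monotoneOn_deriv hx (hx.trans_le hy) hy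

/-- With `V'' ≤ c x^{-(a+2)}` on `[1, ∞)`, the function `V' + c/(a+1) x^{-(a+1)}` is
antitone there and tends to `0`, hence is nonnegative. -/
lemma abs_deriv_le (h : BasicAssumptions V a) :
    ∃ B : ℝ, 0 < B ∧ ∀ x : ℝ, 1 ≤ x → |deriv V x| ≤ B * x ^ (-(a + 1)) := by
  obtain ⟨c, hc, hc''⟩ := h.decV'' 1 one_pos
  have ha : 0 < a + 1 := by linarith [h.one_lt_a]
  set B := c / (a + 1)
  set g : ℝ → ℝ := fun y => deriv V y + B * y ^ (-(a + 1))
  have hg : ∀ y : ℝ, 0 < y → HasDerivAt g (deriv (deriv V) y - c * y ^ (-(a + 2))) y := by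
    intro y hy
    refine ((h.differentiableAt_deriv hy.ne').hasDerivAt.add
      ((Real.hasDerivAt_rpow_const (p := -(a + 1)) (Or.inl hy.ne')).const_mul B)).congr_deriv ?_
    rw [show -(a + 1) - 1 = -(a + 2) by ring]
    linear_combination (-y ^ (-(a + 2))) * div_mul_cancel₀ c ha.ne'
  have hanti : AntitoneOn g (Ici 1) := by
    refine antitoneOn_of_deriv_nonpos (convex_Ici 1)
      (fun y hy => (hg y (one_pos.trans_le hy)).continuousAt.continuousWithinAt) ?_ ?_ <;>
      rw [interior_Ici]
    · exact fun y hy => (hg y (one_pos.trans hy)).differentiableAt.differentiableWithinAt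
    · intro y hy
      have hy0 : 0 < y := one_pos.trans hy
      rw [(hg y hy0).deriv, sub_nonpos]
      simpa [abs_of_pos hy0] using hc'' y (by rw [abs_of_pos hy0]; exact le_of_lt hy)
  have hlim : Tendsto g atTop (𝓝 0) := by
    simpa only [mul_zero, add_zero] using h.decV'.add ((tendsto_rpow_neg_atTop ha).const_mul B)
  refine ⟨B, div_pos hc ha, fun x hx => ?_⟩
  have hgx : 0 ≤ g x := le_of_tendsto hlim <|
    (eventually_ge_atTop x).mono fun y hy => hanti hx (hx.trans hy) hy
  rw [abs_of_nonpos (h.deriv_nonpos (one_pos.trans_le hx))]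
  linarith

end BasicAssumptions

section RpowSeries

variable {s : ℝ}

lemma mul_rpow_le_rpow_sub_rpow (hs : 1 < s) {x : ℝ} (hx : 0 < x) :
    (s - 1) * (x + 1) ^ (-s) ≤ x ^ (1 - s) - (x + 1) ^ (1 - s) := by
  obtain ⟨ξ, hξ, hslope⟩ := exists_hasDerivAt_eq_slope (fun t => t ^ (1 - s))
      (fun t => (1 - s) * t ^ (1 - s - 1)) (lt_add_one x)
      (fun t ht => (Real.continuousAt_rpow_const t (1 - s)
        (Or.inl (hx.trans_le ht.1).ne')).continuousWithinAt)
      (fun t ht => Real.hasDerivAt_rpow_const (Or.inl (hx.trans ht.1).ne'))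
  rw [add_sub_cancel_left, div_one, show 1 - s - 1 = -s by ring] at hslope
  have hmono : (x + 1) ^ (-s) ≤ ξ ^ (-s) :=
    Real.rpow_le_rpow_of_nonpos (hx.trans hξ.1) hξ.2.le (by linarith)
  nlinarith

lemma summable_natCast_add_rpow (hs : 1 < s) (N : ℕ) :
    Summable fun m : ℕ => ((N + m : ℕ) : ℝ) ^ (-s) := by
  simpa only [add_comm] using
    (summable_nat_add_iff N).2 (Real.summable_nat_rpow.2 (by linarith : -s < -1))

lemma tsum_natCast_add_rpow_le (hs : 1 < s) {N : ℕ} (hN : 0 < N) :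
    ∑' m : ℕ, ((N + 1 + m : ℕ) : ℝ) ^ (-s) ≤ (N : ℝ) ^ (1 - s) / (s - 1) := by
  have hs1 : 0 < s - 1 := by linarith
  set F : ℕ → ℝ := fun m => ((N + m : ℕ) : ℝ) ^ (1 - s)
  have hterm (m : ℕ) : ((N + 1 + m : ℕ) : ℝ) ^ (-s) ≤ (F m - F (m + 1)) / (s - 1) := by
    have hx : (0 : ℝ) < ((N + m : ℕ) : ℝ) := by positivity
    have := mul_rpow_le_rpow_sub_rpow hs hx
    rw [le_div_iff₀ hs1]
    simp only [F]
    push_cast at this ⊢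
    rw [show (N : ℝ) + 1 + m = N + m + 1 by ring, ← add_assoc]
    linarith
  refine Real.tsum_le_of_sum_range_le (fun m => by positivity) fun n => ?_
  calc ∑ m ∈ Finset.range n, ((N + 1 + m : ℕ) : ℝ) ^ (-s)
      ≤ ∑ m ∈ Finset.range n, (F m - F (m + 1)) / (s - 1) :=
        Finset.sum_le_sum fun m _ => hterm m
    _ = (F 0 - F n) / (s - 1) := by rw [← Finset.sum_div, Finset.sum_range_sub']
    _ ≤ F 0 / (s - 1) := by
        gcongr
        exact sub_le_self _ (by positivity)
    _ = (N : ℝ) ^ (1 - s) / (s - 1) := by simp [F]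

lemma rpow_le_rpow_neg_mul_rpow_of_le_mul {x y c p : ℝ} (hx : 0 < x) (hc : 0 < c)
    (hxy : x ≤ c * y) (hp : p ≤ 0) : y ^ p ≤ c ^ (-p) * x ^ p :=
  calc y ^ p ≤ (x / c) ^ p :=
        Real.rpow_le_rpow_of_nonpos (by positivity) (by rwa [div_le_iff₀' hc]) hp
    _ = c ^ (-p) * x ^ p := by rw [Real.div_rpow hx.le hc.le, Real.rpow_neg hc.le]; ring

end RpowSeries

section Sigma

variable {V : ℝ → ℝ} {a B : ℝ}

def DerivDecayBound (V : ℝ → ℝ) (a B : ℝ) : Prop :=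
  ∀ k : ℕ, 1 ≤ k → |deriv V k| ≤ B * (k : ℝ) ^ (-(a + 1))

lemma DerivDecayBound.nonneg (hB : DerivDecayBound V a B) : 0 ≤ B := by
  simpa using (abs_nonneg _).trans (hB 1 le_rfl)

noncomputable def sigmaInfTerm (V : ℝ → ℝ) (i m : ℕ) : ℝ :=
  ((m + 1 : ℕ) : ℝ) * |deriv V ((i + 1 + m : ℕ) : ℝ)|

lemma sigmaInf_eq_tsum {i : ℕ} (hi : i ≠ 0) : sigmaInf V i = ∑' m, sigmaInfTerm V i m := by
  rw [sigmaInf, if_neg hi]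
  rfl

lemma sigmaInfTerm_nonneg (V : ℝ → ℝ) (i m : ℕ) : 0 ≤ sigmaInfTerm V i m := by
  unfold sigmaInfTerm
  positivity

lemma sigmaInf_nonneg (V : ℝ → ℝ) (i : ℕ) : 0 ≤ sigmaInf V i := by
  rcases eq_or_ne i 0 with rfl | hi
  · simp [sigmaInf]
  · rw [sigmaInf_eq_tsum hi]
    exact tsum_nonneg (sigmaInfTerm_nonneg V i)

lemma sigman_nonneg (V : ℝ → ℝ) (n i : ℕ) : 0 ≤ sigman V n i := by
  unfold sigman
  split_ifs
  · exact Finset.sum_nonneg fun k _ => by positivity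
  · exact le_rfl

lemma sigmaInfTerm_le (hB : DerivDecayBound V a B) (i m : ℕ) :
    sigmaInfTerm V i m ≤ B * ((i + 1 + m : ℕ) : ℝ) ^ (-a) := by
  set q : ℕ := i + 1 + m
  have hq : (0 : ℝ) < q := by positivity
  calc sigmaInfTerm V i m ≤ (q : ℝ) * (B * (q : ℝ) ^ (-(a + 1))) :=
        mul_le_mul (by norm_cast; omega) (hB q (by omega)) (abs_nonneg _) hq.le
    _ = B * (q : ℝ) ^ (-a) := by
        rw [show -a = 1 + -(a + 1) by ring, Real.rpow_add hq, Real.rpow_one]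
        ring

lemma summable_sigmaInfTerm (hB : DerivDecayBound V a B) (ha : 1 < a) (i : ℕ) :
    Summable (sigmaInfTerm V i) :=
  .of_nonneg_of_le (sigmaInfTerm_nonneg V i) (sigmaInfTerm_le hB i)
    ((summable_natCast_add_rpow ha (i + 1)).mul_left B)

lemma tsum_sigmaInfTerm_add_le (hB : DerivDecayBound V a B) (ha : 1 < a) {i K : ℕ}
    (hiK : 0 < i + K) :
    ∑' m, sigmaInfTerm V i (m + K) ≤ B / (a - 1) * ((i + K : ℕ) : ℝ) ^ (1 - a) := by
  have hterm (m : ℕ) : sigmaInfTerm V i (m + K) ≤ B * ((i + K + 1 + m : ℕ) : ℝ) ^ (-a) := by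
    simpa only [show i + 1 + (m + K) = i + K + 1 + m by omega] using sigmaInfTerm_le hB i (m + K)
  calc ∑' m, sigmaInfTerm V i (m + K)
      ≤ ∑' m : ℕ, B * ((i + K + 1 + m : ℕ) : ℝ) ^ (-a) :=
        Summable.tsum_le_tsum hterm ((summable_nat_add_iff K).2 (summable_sigmaInfTerm hB ha i))
          ((summable_natCast_add_rpow ha _).mul_left B)
    _ = B * ∑' m : ℕ, ((i + K + 1 + m : ℕ) : ℝ) ^ (-a) := tsum_mul_left
    _ ≤ B * (((i + K : ℕ) : ℝ) ^ (1 - a) / (a - 1)) :=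
        mul_le_mul_of_nonneg_left (tsum_natCast_add_rpow_le ha hiK) hB.nonneg
    _ = B / (a - 1) * ((i + K : ℕ) : ℝ) ^ (1 - a) := by ring

lemma sigmaInf_le (hB : DerivDecayBound V a B) (ha : 1 < a) {i : ℕ} (hi : 0 < i) :
    sigmaInf V i ≤ B / (a - 1) * (i : ℝ) ^ (1 - a) := by
  simpa [← sigmaInf_eq_tsum hi.ne'] using tsum_sigmaInfTerm_add_le hB ha (K := 0) hi

lemma sigman_eq_sum_range {n i : ℕ} (hi : 1 ≤ i) (hin : i ≤ n / 2) :
    sigman V n i = ∑ m ∈ Finset.range (n - 2 * i),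
      ((min (m + 1) (n - 2 * i - m) : ℕ) : ℝ) * |deriv V ((i + 1 + m : ℕ) : ℝ)| := by
  rw [sigman, if_pos ⟨hi, hin⟩, ← Finset.Ico_add_one_right_eq_Icc,
    Finset.sum_Ico_eq_sum_range, show n - i + 1 - (i + 1) = n - 2 * i by omega]
  refine Finset.sum_congr rfl fun m hm => ?_
  rw [Finset.mem_range] at hm
  congr 3 <;> omega

lemma sigman_le_sigmaInf (hB : DerivDecayBound V a B) (ha : 1 < a) (n i : ℕ) :
    sigman V n i ≤ sigmaInf V i := by
  by_cases hi : 1 ≤ i ∧ i ≤ n / 2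
  · rw [sigman_eq_sum_range hi.1 hi.2, sigmaInf_eq_tsum (by omega)]
    refine (Finset.sum_le_sum fun m _ => ?_).trans
      ((summable_sigmaInfTerm hB ha i).sum_le_tsum _ fun m _ => sigmaInfTerm_nonneg V i m)
    exact mul_le_mul_of_nonneg_right (by exact_mod_cast min_le_left _ _) (abs_nonneg _)
  · rw [sigman, if_neg hi]
    exact sigmaInf_nonneg V i

/-- For `k ≤ ⌈n/2⌉` the weights `min (k - i) (n + 1 - i - k)` of `σⁿ(i)` and `k - i` of
`σ^∞(i)` agree, so the difference is dominated by the tail of `σ^∞(i)` beyond `⌈n/2⌉`. -/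
lemma sigmaInf_sub_sigman_le_of_le_half (hB : DerivDecayBound V a B) (ha : 1 < a)
    {n i : ℕ} (hi : 1 ≤ i) (hin : i ≤ n / 2) :
    sigmaInf V i - sigman V n i ≤ B / (a - 1) * (((n + 1) / 2 : ℕ) : ℝ) ^ (1 - a) := by
  set K := (n + 1) / 2 - i
  have hhead : ∑ m ∈ Finset.range K, sigmaInfTerm V i m ≤ sigman V n i := by
    rw [sigman_eq_sum_range hi hin]
    refine (Finset.sum_le_sum fun m hm => ?_).trans (Finset.sum_le_sum_of_subset_of_nonneg
      (Finset.range_subset_range.2 (by omega)) fun m _ _ => by positivity)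
    rw [Finset.mem_range] at hm
    rw [sigmaInfTerm, show min (m + 1) (n - 2 * i - m) = m + 1 by omega]
  have htail := tsum_sigmaInfTerm_add_le hB ha (i := i) (K := K) (by omega)
  rw [show i + K = (n + 1) / 2 by omega] at htail
  rw [sigmaInf_eq_tsum (by omega), ← (summable_sigmaInfTerm hB ha i).sum_add_tsum_nat_add K]
  linarith

lemma sigmaInf_sub_sigman_le (hB : DerivDecayBound V a B) (ha : 1 < a) (n : ℕ) {i : ℕ}
    (hi : 0 < i) :
    sigmaInf V i - sigman V n i ≤ B / (a - 1) * (i : ℝ) ^ (1 - a) := by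
  linarith [sigmaInf_le hB ha hi, sigman_nonneg V n i]

lemma sigmaInf_sub_sigman_zero (V : ℝ → ℝ) (n : ℕ) : sigmaInf V 0 - sigman V n 0 = 0 := by
  simp [sigmaInf, sigman]

lemma sq_sigmaInf_sub_sigman_le (hB : DerivDecayBound V a B) (ha : 1 < a) (n i : ℕ) :
    (sigmaInf V i - sigman V n i) ^ 2 ≤ (B / (a - 1)) ^ 2 * (i : ℝ) ^ (-(2 * a - 2)) := by
  rcases Nat.eq_zero_or_pos i with rfl | hi
  · rw [sigmaInf_sub_sigman_zero, zero_pow two_ne_zero]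
    positivity
  calc (sigmaInf V i - sigman V n i) ^ 2 ≤ (B / (a - 1) * (i : ℝ) ^ (1 - a)) ^ 2 :=
        pow_le_pow_left₀ (sub_nonneg.2 (sigman_le_sigmaInf hB ha n i))
          (sigmaInf_sub_sigman_le hB ha n hi) 2
    _ = (B / (a - 1)) ^ 2 * (i : ℝ) ^ (-(2 * a - 2)) := by
        rw [mul_pow, ← Real.rpow_mul_natCast (Nat.cast_nonneg _)]
        congr 2
        push_cast
        ring

end Sigma

section L2Estimate

variable {V : ℝ → ℝ} {a B : ℝ}

lemma summable_sq_sigmaInf_sub_sigman (hB : DerivDecayBound V a B) (ha : 3 / 2 < a) (n : ℕ) :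
    Summable fun i => (sigmaInf V i - sigman V n i) ^ 2 :=
  .of_nonneg_of_le (fun _ => sq_nonneg _) (sq_sigmaInf_sub_sigman_le hB (by linarith) n)
    ((Real.summable_nat_rpow.2 (by linarith)).mul_left _)

lemma sum_sq_sigmaInf_sub_sigman_le (hB : DerivDecayBound V a B) (ha : 1 < a) {n : ℕ}
    (hn : 2 ≤ n) :
    ∑ i ∈ Finset.range (n / 2 + 1), (sigmaInf V i - sigman V n i) ^ 2
      ≤ (B / (a - 1) * 2 ^ (a - 1)) ^ 2 * (n : ℝ) ^ (3 - 2 * a) := by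
  have hn0 : (0 : ℝ) < n := by positivity
  set D := B / (a - 1) * 2 ^ (a - 1) * (n : ℝ) ^ (1 - a)
  have hterm : ∀ i ∈ Finset.range (n / 2 + 1), (sigmaInf V i - sigman V n i) ^ 2 ≤ D ^ 2 := by
    intro i hi
    rw [Finset.mem_range] at hi
    rcases Nat.eq_zero_or_pos i with rfl | hi0
    · rw [sigmaInf_sub_sigman_zero, zero_pow two_ne_zero]
      positivity
    refine pow_le_pow_left₀ (sub_nonneg.2 (sigman_le_sigmaInf hB ha n i)) ?_ 2
    calc sigmaInf V i - sigman V n i ≤ B / (a - 1) * (((n + 1) / 2 : ℕ) : ℝ) ^ (1 - a) :=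
          sigmaInf_sub_sigman_le_of_le_half hB ha hi0 (by omega)
      _ ≤ D := by
          simp only [D, mul_assoc]
          refine mul_le_mul_of_nonneg_left ?_ (div_nonneg hB.nonneg (by linarith))
          simpa using rpow_le_rpow_neg_mul_rpow_of_le_mul (y := (((n + 1) / 2 : ℕ) : ℝ))
            hn0 two_pos (by norm_cast; omega) (by linarith : 1 - a ≤ 0)
  have hpow : (n : ℝ) * ((n : ℝ) ^ (1 - a)) ^ 2 = (n : ℝ) ^ (3 - 2 * a) := by
    rw [← Real.rpow_mul_natCast hn0.le, show (3 : ℝ) - 2 * a = 1 + (1 - a) * (2 : ℕ) by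
      push_cast; ring, Real.rpow_add hn0, Real.rpow_one]
  calc ∑ i ∈ Finset.range (n / 2 + 1), (sigmaInf V i - sigman V n i) ^ 2
      ≤ ∑ _i ∈ Finset.range (n / 2 + 1), D ^ 2 := Finset.sum_le_sum hterm
    _ = ((n / 2 + 1 : ℕ) : ℝ) * D ^ 2 := by simp
    _ ≤ n * D ^ 2 := by gcongr; omega
    _ = (B / (a - 1) * 2 ^ (a - 1)) ^ 2 * (n : ℝ) ^ (3 - 2 * a) := by
        rw [← hpow]
        ring

lemma tsum_sq_sigmaInf_sub_sigman_tail_le (hB : DerivDecayBound V a B) (ha : 3 / 2 < a)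
    {n : ℕ} (hn : 2 ≤ n) :
    ∑' m, (sigmaInf V (m + (n / 2 + 1)) - sigman V n (m + (n / 2 + 1))) ^ 2
      ≤ (B / (a - 1)) ^ 2 * (4 ^ (2 * a - 3) / (2 * a - 3)) * (n : ℝ) ^ (3 - 2 * a) := by
  have hs : 1 < 2 * a - 2 := by linarith
  have hn0 : (0 : ℝ) < n := by positivity
  calc ∑' m, (sigmaInf V (m + (n / 2 + 1)) - sigman V n (m + (n / 2 + 1))) ^ 2
      ≤ ∑' m : ℕ, (B / (a - 1)) ^ 2 * ((n / 2 + 1 + m : ℕ) : ℝ) ^ (-(2 * a - 2)) := by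
        have hsum : Summable fun m =>
            (sigmaInf V (m + (n / 2 + 1)) - sigman V n (m + (n / 2 + 1))) ^ 2 :=
          (summable_nat_add_iff (f := fun i => (sigmaInf V i - sigman V n i) ^ 2) _).2
            (summable_sq_sigmaInf_sub_sigman hB ha n)
        refine Summable.tsum_le_tsum (fun m => ?_) hsum
          ((summable_natCast_add_rpow hs (n / 2 + 1)).mul_left _)
        have := sq_sigmaInf_sub_sigman_le hB (by linarith) n (m + (n / 2 + 1))
        rwa [show ((m + (n / 2 + 1) : ℕ) : ℝ) = ((n / 2 + 1 + m : ℕ) : ℝ) by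
          rw [Nat.add_comm]] at this
    _ = (B / (a - 1)) ^ 2 * ∑' m : ℕ, ((n / 2 + 1 + m : ℕ) : ℝ) ^ (-(2 * a - 2)) :=
        tsum_mul_left
    _ ≤ (B / (a - 1)) ^ 2 * (((n / 2 : ℕ) : ℝ) ^ (3 - 2 * a) / (2 * a - 3)) := by
        gcongr
        have := tsum_natCast_add_rpow_le hs (N := n / 2) (by omega)
        rwa [show 1 - (2 * a - 2) = 3 - 2 * a by ring, show 2 * a - 2 - 1 = 2 * a - 3 by ring]
          at this
    _ ≤ (B / (a - 1)) ^ 2 * ((4 ^ (2 * a - 3) * (n : ℝ) ^ (3 - 2 * a)) / (2 * a - 3)) := by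
        gcongr
        · linarith
        · simpa using rpow_le_rpow_neg_mul_rpow_of_le_mul (y := ((n / 2 : ℕ) : ℝ)) hn0
            four_pos (by norm_cast; omega) (by linarith : 3 - 2 * a ≤ 0)
    _ = (B / (a - 1)) ^ 2 * (4 ^ (2 * a - 3) / (2 * a - 3)) * (n : ℝ) ^ (3 - 2 * a) := by ring

end L2Estimate

/-- quantitative ℓ²-convergence rate
‖σ^∞ − σ^n‖²_{ℓ²(ℕ)} ≤ C n^{3−2a} for all n ≥ 2. -/
theorem statement7 (V : ℝ → ℝ) (a : ℝ) (h : BasicAssumptions V a)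
    (ha : 3 / 2 < a) :
    ∃ C : ℝ, 0 < C ∧ ∀ n : ℕ, 2 ≤ n →
      ∑' i : ℕ, (sigmaInf V i - sigman V n i) ^ 2 ≤ C * (n : ℝ) ^ (3 - 2 * a) := by
  obtain ⟨B, hB0, hB⟩ := h.abs_deriv_le
  have hBk : DerivDecayBound V a B := fun k hk => hB k (by exact_mod_cast hk)
  have hC : 0 < B / (a - 1) := div_pos hB0 (by linarith)
  refine ⟨(B / (a - 1) * 2 ^ (a - 1)) ^ 2 + (B / (a - 1)) ^ 2 * (4 ^ (2 * a - 3) / (2 * a - 3)),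
    add_pos (by positivity) (mul_pos (by positivity) (div_pos (by positivity) (by linarith))),
    fun n hn => ?_⟩
  rw [← (summable_sq_sigmaInf_sub_sigman hBk ha n).sum_add_tsum_nat_add (n / 2 + 1), add_mul]
  exact add_le_add (sum_sq_sigmaInf_sub_sigman_le hBk (by linarith) hn)
    (tsum_sq_sigmaInf_sub_sigman_tail_le hBk ha hn)
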